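/- arXiv:2412.03996 — 2 statements merged into one kernel-verified Lean document; each statement's English description precedes it below -/
import Mathlib

section
/- G₋₁(x,y) = 1 if and only if (x,y) ∈ {(2n, 2n−1) : n ≥ 2} ∪ {(2n−1, 2n) : n ≥ 2} ∪ {(0,2),(1,1),(2,0)}. -/
/-- mex of a finite set of integers: least nonnegative integer not in the set
(negative elements are ignored). -/
noncomputable def mexZ (S : Finset ℤ) : ℤ := ((sInf {n : ℕ | (n : ℤ) ∉ S} : ℕ) : ℤ)

/-- `G₋₁(x,y)`: `G₋₁(0,0) = -1` and for `x + y > 0`,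
`G₋₁(x,y) = mex({G₋₁(x',y) : x' < x} ∪ {G₋₁(x,y') : y' < y})`. -/
noncomputable def Gm1 : ℕ → ℕ → ℤ
  | x, y =>
    if x + y = 0 then -1 else
    mexZ (((Finset.range x).attach.image fun x' => Gm1 x'.1 y) ∪
          ((Finset.range y).attach.image fun y' => Gm1 x y'.1))
termination_by x y => x + y
decreasing_by
  · have := x'.2; simp only [Finset.mem_range] at this; omega
  · have := y'.2; simp only [Finset.mem_range] at this; omega

lemma Gm1_def (x y : ℕ) : Gm1 x y =
    if x + y = 0 then -1 else
    mexZ (((Finset.range x).attach.image fun x' => Gm1 x'.1 y) ∪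
          ((Finset.range y).attach.image fun y' => Gm1 x y'.1)) := by
  rw [Gm1]

lemma mexT_ne (S : Finset ℤ) : {n : ℕ | (n : ℤ) ∉ S}.Nonempty := by
  have hfin : {n : ℕ | (n : ℤ) ∈ S}.Finite :=
    Set.Finite.preimage (fun a _ b _ h => by exact_mod_cast h) S.finite_toSet
  exact hfin.infinite_compl.nonempty

lemma mexZ_eq_zero (S : Finset ℤ) : mexZ S = 0 ↔ (0 : ℤ) ∉ S := by
  unfold mexZ
  rw [Nat.cast_eq_zero, Nat.sInf_eq_zero]
  constructor
  · rintro (h | h)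
    · simpa using h
    · exact absurd h (mexT_ne S).ne_empty
  · intro h; left; simpa using h

lemma mexZ_eq_one (S : Finset ℤ) : mexZ S = 1 ↔ (0 : ℤ) ∈ S ∧ (1 : ℤ) ∉ S := by
  unfold mexZ
  rw [Nat.cast_eq_one]
  constructor
  · intro h
    have h1 : 1 ∈ {n : ℕ | (n : ℤ) ∉ S} := h ▸ Nat.sInf_mem (mexT_ne S)
    have h0 : 0 ∉ {n : ℕ | (n : ℤ) ∉ S} := by
      intro h0; have := Nat.sInf_le h0; omega
    refine ⟨?_, by simpa using h1⟩
    by_contra hc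
    exact h0 (by simpa using hc)
  · rintro ⟨h0, h1⟩
    have hle : sInf {n : ℕ | (n : ℤ) ∉ S} ≤ 1 := Nat.sInf_le (by simpa using h1)
    have hne : sInf {n : ℕ | (n : ℤ) ∉ S} ≠ 0 := by
      intro h
      rcases Nat.sInf_eq_zero.mp h with h | h
      · exact (by simpa using h : (0:ℤ) ∉ S) h0
      · exact (mexT_ne S).ne_empty h
    omega

lemma mem_opts (x y : ℕ) (c : ℤ) :
    c ∈ (((Finset.range x).attach.image fun x' => Gm1 x'.1 y) ∪
          ((Finset.range y).attach.image fun y' => Gm1 x y'.1)) ↔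
    (∃ x' < x, Gm1 x' y = c) ∨ (∃ y' < y, Gm1 x y' = c) := by
  simp [Finset.mem_union, Finset.mem_image]


lemma Gm1_zero_iff (x y : ℕ) (h : x + y ≠ 0) :
    Gm1 x y = 0 ↔ ¬((∃ x' < x, Gm1 x' y = 0) ∨ (∃ y' < y, Gm1 x y' = 0)) := by
  rw [Gm1_def, if_neg h, mexZ_eq_zero, mem_opts]

lemma Gm1_one_iff (x y : ℕ) (h : x + y ≠ 0) :
    Gm1 x y = 1 ↔ ((∃ x' < x, Gm1 x' y = 0) ∨ (∃ y' < y, Gm1 x y' = 0)) ∧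
      ¬((∃ x' < x, Gm1 x' y = 1) ∨ (∃ y' < y, Gm1 x y' = 1)) := by
  rw [Gm1_def, if_neg h, mexZ_eq_one, mem_opts, mem_opts]

lemma Gm1_zero_zero : Gm1 0 0 = -1 := by rw [Gm1_def]; rfl

/-- positions with value 0 -/
def Az (x y : ℕ) : Prop :=
  (x = 0 ∧ y = 1) ∨ (x = 1 ∧ y = 0) ∨ (x = y ∧ 2 ≤ x)

/-- positions with value 1 -/
def Bz (x y : ℕ) : Prop :=
  (x = 0 ∧ y = 2) ∨ (x = 1 ∧ y = 1) ∨ (x = 2 ∧ y = 0) ∨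
  (y = x + 1 ∧ 3 ≤ x ∧ x % 2 = 1) ∨ (x = y + 1 ∧ 3 ≤ y ∧ y % 2 = 1)

/-- some option has value 0 -/
def Zf (x y : ℕ) : Prop :=
  (y = 1 ∧ 1 ≤ x) ∨ (y = 0 ∧ 2 ≤ x) ∨ (2 ≤ y ∧ y < x) ∨
  (x = 1 ∧ 1 ≤ y) ∨ (x = 0 ∧ 2 ≤ y) ∨ (2 ≤ x ∧ x < y)

/-- some option has value 1 -/
def Of (x y : ℕ) : Prop :=
  ((y = 2 ∧ 1 ≤ x) ∨ (y = 1 ∧ 2 ≤ x) ∨ (y = 0 ∧ 3 ≤ x) ∨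
   (3 ≤ y ∧ y % 2 = 1 ∧ y + 2 ≤ x) ∨ (4 ≤ y ∧ y % 2 = 0 ∧ y ≤ x)) ∨
  ((x = 2 ∧ 1 ≤ y) ∨ (x = 1 ∧ 2 ≤ y) ∨ (x = 0 ∧ 3 ≤ y) ∨
   (3 ≤ x ∧ x % 2 = 1 ∧ x + 2 ≤ y) ∨ (4 ≤ x ∧ x % 2 = 0 ∧ x ≤ y))

lemma e0lem (x y : ℕ)
    (ihx : ∀ x' < x, (Gm1 x' y = 0 ↔ Az x' y))
    (ihy : ∀ y' < y, (Gm1 x y' = 0 ↔ Az x y')) :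
    ((∃ x' < x, Gm1 x' y = 0) ∨ (∃ y' < y, Gm1 x y' = 0)) ↔ Zf x y := by
  unfold Zf
  constructor
  · rintro (⟨x', hx', he⟩ | ⟨y', hy', he⟩)
    · have := (ihx x' hx').mp he; unfold Az at this; omega
    · have := (ihy y' hy').mp he; unfold Az at this; omega
  · rintro (⟨h1, h2⟩ | ⟨h1, h2⟩ | ⟨h1, h2⟩ | ⟨h1, h2⟩ | ⟨h1, h2⟩ | ⟨h1, h2⟩)
    · exact Or.inl ⟨0, by omega, (ihx 0 (by omega)).mpr (by unfold Az; omega)⟩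
    · exact Or.inl ⟨1, by omega, (ihx 1 (by omega)).mpr (by unfold Az; omega)⟩
    · exact Or.inl ⟨y, by omega, (ihx y (by omega)).mpr (by unfold Az; omega)⟩
    · exact Or.inr ⟨0, by omega, (ihy 0 (by omega)).mpr (by unfold Az; omega)⟩
    · exact Or.inr ⟨1, by omega, (ihy 1 (by omega)).mpr (by unfold Az; omega)⟩
    · exact Or.inr ⟨x, by omega, (ihy x (by omega)).mpr (by unfold Az; omega)⟩

lemma e1lem (x y : ℕ)
    (ihx : ∀ x' < x, (Gm1 x' y = 1 ↔ Bz x' y))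
    (ihy : ∀ y' < y, (Gm1 x y' = 1 ↔ Bz x y')) :
    ((∃ x' < x, Gm1 x' y = 1) ∨ (∃ y' < y, Gm1 x y' = 1)) ↔ Of x y := by
  unfold Of
  constructor
  · rintro (⟨x', hx', he⟩ | ⟨y', hy', he⟩)
    · have := (ihx x' hx').mp he; unfold Bz at this; left; omega
    · have := (ihy y' hy').mp he; unfold Bz at this; right; omega
  · rintro (hc | hr)
    case inl =>
      rcases hc with ⟨h1, h2⟩ | ⟨h1, h2⟩ | ⟨h1, h2⟩ | ⟨h1, h2, h3⟩ | ⟨h1, h2, h3⟩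
      · exact Or.inl ⟨0, by omega, (ihx 0 (by omega)).mpr (by unfold Bz; omega)⟩
      · exact Or.inl ⟨1, by omega, (ihx 1 (by omega)).mpr (by unfold Bz; omega)⟩
      · exact Or.inl ⟨2, by omega, (ihx 2 (by omega)).mpr (by unfold Bz; omega)⟩
      · exact Or.inl ⟨y + 1, by omega, (ihx (y+1) (by omega)).mpr (by unfold Bz; omega)⟩
      · exact Or.inl ⟨y - 1, by omega, (ihx (y-1) (by omega)).mpr (by unfold Bz; omega)⟩
    case inr =>
      rcases hr with ⟨h1, h2⟩ | ⟨h1, h2⟩ | ⟨h1, h2⟩ | ⟨h1, h2, h3⟩ | ⟨h1, h2, h3⟩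
      · exact Or.inr ⟨0, by omega, (ihy 0 (by omega)).mpr (by unfold Bz; omega)⟩
      · exact Or.inr ⟨1, by omega, (ihy 1 (by omega)).mpr (by unfold Bz; omega)⟩
      · exact Or.inr ⟨2, by omega, (ihy 2 (by omega)).mpr (by unfold Bz; omega)⟩
      · exact Or.inr ⟨x + 1, by omega, (ihy (x+1) (by omega)).mpr (by unfold Bz; omega)⟩
      · exact Or.inr ⟨x - 1, by omega, (ihy (x-1) (by omega)).mpr (by unfold Bz; omega)⟩

lemma step0 (x y : ℕ) (h0 : x + y ≠ 0) : ¬ Zf x y ↔ Az x y := by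
  unfold Zf Az; omega

lemma step1 (x y : ℕ) : (Zf x y ∧ ¬ Of x y) ↔ Bz x y := by
  unfold Zf Of Bz
  constructor
  · rintro ⟨hz, ho⟩
    push_neg at ho
    obtain ⟨⟨a1, a2, a3, a4, a5⟩, b1, b2, b3, b4, b5⟩ := ho
    rcases hz with h | h | h | h | h | h
    · clear a1 a3 a4 a5 b1 b2 b3 b4 b5; omega
    · clear a1 a2 a4 a5 b1 b2 b3 b4 b5; omega
    · clear a2 a3 b1 b2 b3 b4 b5; omega
    · clear a1 a2 a3 a4 a5 b1 b3 b4 b5; omega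
    · clear a1 a2 a3 a4 a5 b1 b2 b4 b5; omega
    · clear a2 a3 a4 a5 b2 b3; omega
  · intro h
    refine ⟨by omega, ?_⟩
    rcases h with ⟨h1, h2⟩ | ⟨h1, h2⟩ | ⟨h1, h2⟩ | ⟨h1, h2, h3⟩ | ⟨h1, h2, h3⟩ <;> omega

lemma keyAB : ∀ n : ℕ, ∀ x y : ℕ, x + y = n →
    (Gm1 x y = 0 ↔ Az x y) ∧ (Gm1 x y = 1 ↔ Bz x y) := by
  intro n
  induction n using Nat.strong_induction_on with
  | _ n ih =>
    intro x y hxy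
    by_cases h0 : x + y = 0
    · obtain ⟨rfl, rfl⟩ : x = 0 ∧ y = 0 := by omega
      rw [Gm1_zero_zero]
      constructor <;> constructor <;> intro h
      · exact absurd h (by decide)
      · exact absurd h (by unfold Az; omega)
      · exact absurd h (by decide)
      · exact absurd h (by unfold Bz; omega)
    · have ihx : ∀ x' < x, (Gm1 x' y = 0 ↔ Az x' y) ∧ (Gm1 x' y = 1 ↔ Bz x' y) :=
        fun x' hx' => ih (x' + y) (by omega) x' y rfl
      have ihy : ∀ y' < y, (Gm1 x y' = 0 ↔ Az x y') ∧ (Gm1 x y' = 1 ↔ Bz x y') :=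
        fun y' hy' => ih (x + y') (by omega) x y' rfl
      have e0 := e0lem x y (fun x' h => (ihx x' h).1) (fun y' h => (ihy y' h).1)
      have e1 := e1lem x y (fun x' h => (ihx x' h).2) (fun y' h => (ihy y' h).2)
      constructor
      · rw [Gm1_zero_iff x y h0, e0]
        exact step0 x y h0
      · rw [Gm1_one_iff x y h0, e0, e1]
        exact step1 x y

theorem Gm1_eq_one_iff (x y : ℕ) :
    Gm1 x y = 1 ↔
      ((∃ n : ℕ, 2 ≤ n ∧ ((x = 2 * n ∧ y = 2 * n - 1) ∨ (x = 2 * n - 1 ∧ y = 2 * n))) ∨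
        (x, y) = (0, 2) ∨ (x, y) = (1, 1) ∨ (x, y) = (2, 0)) := by
  rw [(keyAB (x + y) x y rfl).2]
  simp only [Prod.mk.injEq]
  constructor
  · intro h
    unfold Bz at h
    rcases h with h | h | h | h | h
    · tauto
    · tauto
    · tauto
    · exact Or.inl ⟨(x + 1) / 2, by omega⟩
    · exact Or.inl ⟨(y + 1) / 2, by omega⟩
  · rintro (⟨n, hn, h⟩ | h | h | h) <;> unfold Bz <;> omega
end

section
/- G₋₁(x,y) = 3 if and only if (x,y) ∈ {(4n−2, 4n), (4n−1, 4n+1), (4n, 4n−2), (4n+1, 4n−1) : n ≥ 2} ∪ {(0,4),(1,3),(2,5),(3,1),(4,0),(5,2)}. -/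
set_option maxHeartbeats 1000000

def sf0 (k : ℕ) : ℕ := if k = 0 then 1 else if k = 1 then 0 else k
def sf1 (k : ℕ) : ℕ := if k = 0 then 2 else if k = 1 then 1 else if k = 2 then 0 else
            if k % 2 = 1 then k + 1 else k - 1
def sf2 (k : ℕ) : ℕ := if k = 0 then 3 else if k = 1 then 2 else if k = 2 then 1 else
            if k = 3 then 0 else if k % 2 = 0 then k + 1 else k - 1
def sf3 (k : ℕ) : ℕ := if k = 0 then 4 else if k = 1 then 3 else if k = 2 then 5 else
            if k = 3 then 1 else if k = 4 then 0 else if k = 5 then 2 else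
            if k % 4 ≤ 1 then k - 2 else k + 2

lemma sf0_spec (k : ℕ) :
    (k = 0 ∧ sf0 k = 1) ∨ (k = 1 ∧ sf0 k = 0) ∨ (2 ≤ k ∧ sf0 k = k) := by
  unfold sf0; split_ifs <;> omega

lemma sf1_spec (k : ℕ) :
    (k = 0 ∧ sf1 k = 2) ∨ (k = 1 ∧ sf1 k = 1) ∨ (k = 2 ∧ sf1 k = 0) ∨
    (3 ≤ k ∧ k % 2 = 1 ∧ sf1 k = k + 1) ∨ (4 ≤ k ∧ k % 2 = 0 ∧ sf1 k = k - 1) := by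
  unfold sf1; split_ifs <;> omega

lemma sf2_spec (k : ℕ) :
    (k = 0 ∧ sf2 k = 3) ∨ (k = 1 ∧ sf2 k = 2) ∨ (k = 2 ∧ sf2 k = 1) ∨ (k = 3 ∧ sf2 k = 0) ∨
    (4 ≤ k ∧ k % 2 = 0 ∧ sf2 k = k + 1) ∨ (5 ≤ k ∧ k % 2 = 1 ∧ sf2 k = k - 1) := by
  unfold sf2; split_ifs <;> omega

lemma sf3_spec (k : ℕ) :
    (k = 0 ∧ sf3 k = 4) ∨ (k = 1 ∧ sf3 k = 3) ∨ (k = 2 ∧ sf3 k = 5) ∨ (k = 3 ∧ sf3 k = 1) ∨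
    (k = 4 ∧ sf3 k = 0) ∨ (k = 5 ∧ sf3 k = 2) ∨
    (6 ≤ k ∧ k % 4 ≤ 1 ∧ sf3 k = k - 2) ∨ (6 ≤ k ∧ 2 ≤ k % 4 ∧ sf3 k = k + 2) := by
  unfold sf3; split_ifs <;> omega

lemma sf0_invol (k : ℕ) : sf0 (sf0 k) = k := by
  have h1 := sf0_spec k; have h2 := sf0_spec (sf0 k); omega
lemma sf1_invol (k : ℕ) : sf1 (sf1 k) = k := by
  have h1 := sf1_spec k; have h2 := sf1_spec (sf1 k); omega
lemma sf2_invol (k : ℕ) : sf2 (sf2 k) = k := by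
  have h1 := sf2_spec k; have h2 := sf2_spec (sf2 k); omega
lemma sf3_invol (k : ℕ) : sf3 (sf3 k) = k := by
  have h1 := sf3_spec k; have h2 := sf3_spec (sf3 k); omega

lemma arith3 (x y : ℕ) :
    (¬(sf3 y < x ∨ sf3 x < y) ∧ (sf0 y < x ∨ sf0 x < y) ∧ (sf1 y < x ∨ sf1 x < y) ∧
      (sf2 y < x ∨ sf2 x < y)) ↔ y = sf3 x := by
  have a0x := sf0_spec x; have a0y := sf0_spec y
  have a1x := sf1_spec x; have a1y := sf1_spec y
  have a2x := sf2_spec x; have a2y := sf2_spec y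
  have a3x := sf3_spec x; have a3y := sf3_spec y
  rcases Nat.lt_or_ge x 10 with hx | hx <;> rcases Nat.lt_or_ge y 10 with hy | hy
  · interval_cases x <;> interval_cases y <;> omega
  · interval_cases x <;> omega
  · interval_cases y <;> omega
  · omega

lemma mexZ_eq_iff (S : Finset ℤ) (v : ℕ) :
    mexZ S = (v : ℤ) ↔ ((v : ℤ) ∉ S ∧ ∀ u : ℕ, u < v → (u : ℤ) ∈ S) := by
  unfold mexZ
  constructor
  · intro h
    have hv : sInf {n : ℕ | (n : ℤ) ∉ S} = v := by exact_mod_cast h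
    have hne : {n : ℕ | (n : ℤ) ∉ S}.Nonempty := by
      refine ⟨(S.sup Int.toNat) + 1, fun hc => ?_⟩
      have := Finset.le_sup (f := Int.toNat) hc
      simp only [Int.toNat_natCast] at this
      omega
    refine ⟨by have := Nat.sInf_mem hne; rwa [hv] at this, fun u hu => ?_⟩
    by_contra hc
    have := Nat.sInf_le (show u ∈ {n : ℕ | (n : ℤ) ∉ S} from hc)
    omega
  · rintro ⟨h1, h2⟩
    have hne : {n : ℕ | (n : ℤ) ∉ S}.Nonempty := ⟨v, h1⟩
    have hle : sInf {n : ℕ | (n : ℤ) ∉ S} ≤ v := Nat.sInf_le h1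
    have hmem := Nat.sInf_mem hne
    rcases Nat.lt_or_ge (sInf {n : ℕ | (n : ℤ) ∉ S}) v with hlt | hge
    · exact absurd (h2 _ hlt) hmem
    · exact_mod_cast congrArg (Nat.cast : ℕ → ℤ) (le_antisymm hle hge)

lemma key : ∀ n x y : ℕ, x + y = n →
    ((Gm1 x y = 0 ↔ y = sf0 x) ∧ (Gm1 x y = 1 ↔ y = sf1 x) ∧
     (Gm1 x y = 2 ↔ y = sf2 x) ∧ (Gm1 x y = 3 ↔ y = sf3 x)) := by
  intro n
  induction n using Nat.strong_induction_on with
  | _ n IH =>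
    intro x y hxy
    by_cases h0 : x + y = 0
    · have hx : x = 0 := by omega
      have hy : y = 0 := by omega
      subst hx hy
      rw [Gm1]
      simp only [if_pos rfl]
      norm_num [sf0, sf1, sf2, sf3]
    · rw [Gm1, if_neg h0]
      set S := (((Finset.range x).attach.image fun x' => Gm1 x'.1 y) ∪
          ((Finset.range y).attach.image fun y' => Gm1 x y'.1)) with hS
      have hmem : ∀ (c : ℤ) (f : ℕ → ℕ), (∀ k, f (f k) = k) →
          (∀ a b : ℕ, a + b < n → (Gm1 a b = c ↔ b = f a)) →
          ((c ∈ S) ↔ (f y < x ∨ f x < y)) := by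
        intro c f hinv hval
        rw [hS]
        simp only [Finset.mem_union, Finset.mem_image, Finset.mem_attach, true_and,
          Subtype.exists, Finset.mem_range]
        constructor
        · rintro (⟨a, ha, hGa⟩ | ⟨b, hb, hGb⟩)
          · left
            have := (hval a y (by omega)).1 hGa
            have : a = f y := by rw [this, hinv]
            omega
          · right
            have := (hval x b (by omega)).1 hGb
            have : b = f x := this
            omega
        · rintro (h | h)
          · exact Or.inl ⟨f y, h, (hval (f y) y (by omega)).2 (hinv y).symm⟩
          · exact Or.inr ⟨f x, h, (hval x (f x) (by omega)).2 rfl⟩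
      have IH0 : ∀ a b : ℕ, a + b < n → (Gm1 a b = 0 ↔ b = sf0 a) :=
        fun a b h => (IH _ h a b rfl).1
      have IH1 : ∀ a b : ℕ, a + b < n → (Gm1 a b = 1 ↔ b = sf1 a) :=
        fun a b h => (IH _ h a b rfl).2.1
      have IH2 : ∀ a b : ℕ, a + b < n → (Gm1 a b = 2 ↔ b = sf2 a) :=
        fun a b h => (IH _ h a b rfl).2.2.1
      have IH3 : ∀ a b : ℕ, a + b < n → (Gm1 a b = 3 ↔ b = sf3 a) :=
        fun a b h => (IH _ h a b rfl).2.2.2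
      have m0 := hmem 0 sf0 sf0_invol IH0
      have m1 := hmem 1 sf1 sf1_invol IH1
      have m2 := hmem 2 sf2 sf2_invol IH2
      have m3 := hmem 3 sf3 sf3_invol IH3
      have e0 : (mexZ S = 0) ↔ ((0:ℤ) ∉ S) := by
        have := mexZ_eq_iff S 0
        push_cast at this
        rw [this]
        simp
      have e1 : (mexZ S = 1) ↔ ((1:ℤ) ∉ S ∧ (0:ℤ) ∈ S) := by
        have := mexZ_eq_iff S 1
        push_cast at this
        rw [this]
        constructor
        · rintro ⟨h1, h2⟩
          exact ⟨h1, by have := h2 0 (by norm_num); exact_mod_cast this⟩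
        · rintro ⟨h1, h2⟩
          refine ⟨h1, fun u hu => ?_⟩
          have : u = 0 := by omega
          subst this; exact_mod_cast h2
      have e2 : (mexZ S = 2) ↔ ((2:ℤ) ∉ S ∧ (0:ℤ) ∈ S ∧ (1:ℤ) ∈ S) := by
        have := mexZ_eq_iff S 2
        push_cast at this
        rw [this]
        constructor
        · rintro ⟨h1, h2⟩
          exact ⟨h1, by have := h2 0 (by norm_num); exact_mod_cast this,
            by have := h2 1 (by norm_num); exact_mod_cast this⟩
        · rintro ⟨h1, h2, h3⟩
          refine ⟨h1, fun u hu => ?_⟩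
          interval_cases u
          · exact_mod_cast h2
          · exact_mod_cast h3
      have e3 : (mexZ S = 3) ↔ ((3:ℤ) ∉ S ∧ (0:ℤ) ∈ S ∧ (1:ℤ) ∈ S ∧ (2:ℤ) ∈ S) := by
        have := mexZ_eq_iff S 3
        push_cast at this
        rw [this]
        constructor
        · rintro ⟨h1, h2⟩
          exact ⟨h1, by have := h2 0 (by norm_num); exact_mod_cast this,
            by have := h2 1 (by norm_num); exact_mod_cast this,
            by have := h2 2 (by norm_num); exact_mod_cast this⟩
        · rintro ⟨h1, h2, h3, h4⟩
          refine ⟨h1, fun u hu => ?_⟩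
          interval_cases u
          · exact_mod_cast h2
          · exact_mod_cast h3
          · exact_mod_cast h4
      clear hmem IH IH0 IH1 IH2 IH3 hS
      refine ⟨?_, ?_, ?_, ?_⟩
      · rw [e0, m0]
        have a0x := sf0_spec x; have a0y := sf0_spec y
        omega
      · rw [e1, m1, m0]
        have a0x := sf0_spec x; have a0y := sf0_spec y
        have a1x := sf1_spec x; have a1y := sf1_spec y
        omega
      · rw [e2, m2, m1, m0]
        have a0x := sf0_spec x; have a0y := sf0_spec y
        have a1x := sf1_spec x; have a1y := sf1_spec y
        have a2x := sf2_spec x; have a2y := sf2_spec y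
        omega
      · rw [e3, m3, m2, m1, m0]
        exact arith3 x y

theorem Gm1_eq_three_iff (x y : ℕ) :
    Gm1 x y = 3 ↔
      ((∃ n : ℕ, 2 ≤ n ∧
          ((x = 4 * n - 2 ∧ y = 4 * n) ∨ (x = 4 * n - 1 ∧ y = 4 * n + 1) ∨
           (x = 4 * n ∧ y = 4 * n - 2) ∨ (x = 4 * n + 1 ∧ y = 4 * n - 1))) ∨
        (x, y) = (0, 4) ∨ (x, y) = (1, 3) ∨ (x, y) = (2, 5) ∨
        (x, y) = (3, 1) ∨ (x, y) = (4, 0) ∨ (x, y) = (5, 2)) := by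
  rw [(key (x + y) x y rfl).2.2.2]
  have hx := sf3_spec x
  simp only [Prod.mk.injEq]
  constructor
  · intro h
    rcases hx with ⟨h1,h2⟩|⟨h1,h2⟩|⟨h1,h2⟩|⟨h1,h2⟩|⟨h1,h2⟩|⟨h1,h2⟩|⟨h1,h2,h3⟩|⟨h1,h2,h3⟩
    · exact Or.inr (Or.inl ⟨h1, by omega⟩)
    · exact Or.inr (Or.inr (Or.inl ⟨h1, by omega⟩))
    · exact Or.inr (Or.inr (Or.inr (Or.inl ⟨h1, by omega⟩)))
    · exact Or.inr (Or.inr (Or.inr (Or.inr (Or.inl ⟨h1, by omega⟩))))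
    · exact Or.inr (Or.inr (Or.inr (Or.inr (Or.inr (Or.inl ⟨h1, by omega⟩)))))
    · exact Or.inr (Or.inr (Or.inr (Or.inr (Or.inr (Or.inr ⟨h1, by omega⟩)))))
    · -- x ≥ 6, x % 4 ≤ 1, y = x - 2 : then x = 4n or 4n+1
      left
      exact ⟨x / 4, by omega, by omega⟩
    · left
      exact ⟨(x + 2) / 4, by omega, by omega⟩
  · rintro (⟨m, hm, hc⟩ | ⟨h1,h2⟩ | ⟨h1,h2⟩ | ⟨h1,h2⟩ | ⟨h1,h2⟩ | ⟨h1,h2⟩ | ⟨h1,h2⟩) <;> omega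
end
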